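/- For n ≥ 1, sptbar2(n) is odd if and only if n is an even perfect square or twice a perfect square. -/

import Mathlib

open scoped Classical

/-- The number of smallest parts of a multiset of positive integers
(the multiplicity of the minimum; `0` for the empty multiset). -/
noncomputable def numSmallest (M : Multiset ℕ) : ℕ :=
  (M.filter fun a => ∀ b ∈ M, a ≤ b).card

/-- `sptbar2 n` : the total number of smallest parts, summed over all overpartitions of `n`
whose smallest part is even and not overlined. -/
noncomputable def sptbar2 (n : ℕ) : ℕ :=
  ∑ p : Nat.Partition n, ∑ S ∈ p.parts.toFinset.powerset,
    if (∀ a ∈ S, ∃ b ∈ p.parts, b < a) ∧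
        (∃ a ∈ p.parts, (∀ b ∈ p.parts, a ≤ b) ∧ Even a) then
      numSmallest p.parts else 0

/-!
Fix a partition `p` of `n` whose smallest part `m` is even. Its overpartitions with `m` not
overlined are the choices of a set of the other `d - 1` distinct parts to overline, so `p`
contributes `numSmallest p · 2 ^ (d - 1)` to `sptbar2 n`. Modulo 2 only the partitions into `k`
equal parts `n / k` survive, each contributing `k`; hence `sptbar2 n` has the parity of the number
of odd divisors `k` of `n` with `n / k` even. For even `n` these are the divisors of the odd part
of `n`, and their number is odd exactly when the odd part is a square, i.e. when `n` is a square
or twice a square.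
-/

open Finset Multiset

theorem Finset.odd_prod_iff {ι : Type*} (s : Finset ι) (f : ι → ℕ) :
    Odd (∏ i ∈ s, f i) ↔ ∀ i ∈ s, Odd (f i) := by
  induction s using Finset.cons_induction with
  | empty => simp
  | cons a s ha ih => rw [Finset.prod_cons, Nat.odd_mul, ih, Finset.forall_mem_cons]

theorem Nat.isSquare_iff_forall_even_factorization {n : ℕ} (hn : n ≠ 0) :
    IsSquare n ↔ ∀ p, Even (n.factorization p) := by
  constructor
  · rintro ⟨r, rfl⟩ p
    have hr : r ≠ 0 := by rintro rfl; exact hn rfl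
    rw [Nat.factorization_mul hr hr, Finsupp.add_apply]
    exact ⟨_, rfl⟩
  · intro h
    refine ⟨∏ p ∈ n.primeFactors, p ^ (n.factorization p / 2), ?_⟩
    rw [← Finset.prod_mul_distrib]
    conv_lhs => rw [← Nat.prod_factorization_pow_eq_self hn]
    refine Finset.prod_congr rfl fun p _ => ?_
    rw [← pow_add, ← two_mul, Nat.two_mul_div_two_of_even (h p)]

theorem Nat.odd_card_divisors_iff_isSquare {n : ℕ} (hn : n ≠ 0) :
    Odd #n.divisors ↔ IsSquare n := by
  rw [Nat.card_divisors hn, Finset.odd_prod_iff, Nat.isSquare_iff_forall_even_factorization hn]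
  simp only [Nat.odd_add_one, Nat.not_odd_iff_even]
  refine ⟨fun h p => ?_, fun h p _ => h p⟩
  by_cases hp : p ∈ n.primeFactors
  · exact h p hp
  · rw [Finsupp.notMem_support_iff.1 (Nat.support_factorization n ▸ hp)]
    exact ⟨0, rfl⟩

theorem Nat.filter_divisors_eq_divisors_ordCompl_two {n : ℕ} (hn : n ≠ 0) (hev : Even n) :
    {k ∈ n.divisors | Even (n / k) ∧ Odd k} = (ordCompl[2] n).divisors := by
  ext k
  simp only [Finset.mem_filter, Nat.mem_divisors, ne_eq, (Nat.ordCompl_pos 2 hn).ne',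
    not_false_eq_true, and_true, hn]
  constructor
  · rintro ⟨hkn, -, hk⟩
    exact Nat.dvd_ordCompl_of_dvd_not_dvd hkn hk.not_two_dvd_nat
  · intro hk
    have hkn : k ∣ n := hk.trans (Nat.ordCompl_dvd n 2)
    have hko : Odd k := Nat.odd_iff.2 (Nat.two_dvd_ne_zero.1 fun h2 =>
      Nat.not_dvd_ordCompl Nat.prime_two hn (h2.trans hk))
    refine ⟨hkn, ?_, hko⟩
    rw [even_iff_two_dvd, Nat.dvd_div_iff_mul_dvd hkn]
    exact (Nat.coprime_two_right.2 hko).mul_dvd_of_dvd_of_dvd hkn hev.two_dvd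

theorem Nat.filter_divisors_eq_empty_of_odd {n : ℕ} (hn : Odd n) :
    {k ∈ n.divisors | Even (n / k) ∧ Odd k} = ∅ :=
  Finset.filter_false_of_mem fun k hk ⟨hk2, _⟩ => Nat.not_even_iff_odd.2 hn
    (Nat.div_mul_cancel (Nat.dvd_of_mem_divisors hk) ▸ hk2.mul_right k)

theorem Nat.isSquare_ordCompl_two_iff {n : ℕ} (hn : n ≠ 0) :
    IsSquare (ordCompl[2] n) ↔ IsSquare n ∨ ∃ k, n = 2 * k ^ 2 := by
  constructor
  · rintro ⟨r, hr⟩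
    have hn' := Nat.ordProj_mul_ordCompl_eq_self n 2
    rw [hr] at hn'
    rcases Nat.even_or_odd (n.factorization 2) with ⟨a, ha⟩ | ⟨a, ha⟩
    · exact Or.inl ⟨2 ^ a * r, by rw [← hn', ha, pow_add]; ring⟩
    · exact Or.inr ⟨2 ^ a * r, by rw [← hn', ha]; ring⟩
  · rintro (⟨k, rfl⟩ | ⟨k, rfl⟩)
    · rw [Nat.ordCompl_mul]
      exact ⟨_, rfl⟩
    · rw [show 2 * k ^ 2 = 2 ^ 1 * (k * k) by ring,
        Nat.ordCompl_self_pow_mul _ _ Nat.prime_two, Nat.ordCompl_mul]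
      exact ⟨_, rfl⟩

theorem Multiset.card_filter_powerset_forall_exists_lt {α : Type*} [LinearOrder α]
    {M : Multiset α} {m : α} (hm : m ∈ M) (hmin : ∀ b ∈ M, m ≤ b) :
    #(M.toFinset.powerset.filter fun S => ∀ a ∈ S, ∃ b ∈ M, b < a) = 2 ^ (#M.toFinset - 1) := by
  have h : (M.toFinset.powerset.filter fun S => ∀ a ∈ S, ∃ b ∈ M, b < a)
      = (M.toFinset.erase m).powerset := by
    ext S
    simp only [Finset.mem_filter, Finset.mem_powerset, Finset.subset_iff, Finset.mem_erase,
      Multiset.mem_toFinset]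
    refine ⟨fun h a ha => ⟨?_, h.1 ha⟩, fun h => ⟨fun _ ha => (h ha).2, fun a ha => ?_⟩⟩
    · obtain ⟨b, hb, hba⟩ := h.2 a ha
      exact ((hmin b hb).trans_lt hba).ne'
    · exact ⟨m, hm, (hmin a (h ha).2).lt_of_ne' (h ha).1⟩
  rw [h, Finset.card_powerset, Finset.card_erase_of_mem (Multiset.mem_toFinset.2 hm)]

def HasEvenMin (M : Multiset ℕ) : Prop :=
  ∃ a ∈ M, (∀ b ∈ M, a ≤ b) ∧ Even a

theorem numSmallest_replicate (k m : ℕ) : numSmallest (replicate k m) = k := by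
  rw [numSmallest, Multiset.filter_eq_self.2, Multiset.card_replicate]
  intro a ha b hb
  rw [Multiset.eq_of_mem_replicate ha, Multiset.eq_of_mem_replicate hb]

theorem hasEvenMin_replicate {k : ℕ} (hk : k ≠ 0) (m : ℕ) :
    HasEvenMin (replicate k m) ↔ Even m := by
  constructor
  · rintro ⟨a, ha, -, hae⟩
    rwa [Multiset.eq_of_mem_replicate ha] at hae
  · intro hm
    refine ⟨m, Multiset.mem_replicate.2 ⟨hk, rfl⟩, fun b hb => ?_, hm⟩
    rw [Multiset.eq_of_mem_replicate hb]

theorem Nat.Partition.card_mem_divisors_and_parts_eq_replicate {n : ℕ} (p : n.Partition)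
    (h : #p.parts.toFinset = 1) :
    p.parts.card ∈ n.divisors ∧ p.parts = replicate p.parts.card (n / p.parts.card) := by
  obtain ⟨hc, a, ha⟩ := (Multiset.toFinset_card_eq_one_iff _).1 h
  rw [Multiset.nsmul_singleton] at ha
  have hsum : p.parts.card * a = n := by
    have := p.parts_sum
    rwa [ha, Multiset.sum_replicate, smul_eq_mul] at this
  have ha0 : a ≠ 0 := (p.parts_pos (ha ▸ Multiset.mem_replicate.2 ⟨hc, rfl⟩)).ne'
  refine ⟨Nat.mem_divisors.2 ⟨Dvd.intro a hsum, hsum ▸ Nat.mul_ne_zero hc ha0⟩, ?_⟩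
  rwa [← Nat.eq_div_of_mul_eq_right hc hsum]

-- A partition into equal parts is determined by its number of parts, a divisor of `n`.
theorem Nat.Partition.sum_filter_card_toFinset_eq_one {M : Type*} [AddCommMonoid M] (n : ℕ)
    (f : ℕ → M) :
    ∑ p : n.Partition with #p.parts.toFinset = 1, f p.parts.card = ∑ k ∈ n.divisors, f k := by
  refine Finset.sum_bij' (fun p _ => p.parts.card)
    (fun k hk => ⟨replicate k (n / k), fun {i} hi => ?_, ?_⟩) (fun p hp => ?_) (fun k hk => ?_)
    (fun p hp => ?_) (fun k hk => Multiset.card_replicate k _) (fun _ _ => rfl)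
  · rw [Multiset.eq_of_mem_replicate hi]
    exact Nat.div_pos (Nat.divisor_le hk) (Nat.pos_of_mem_divisors hk)
  · rw [Multiset.sum_replicate, smul_eq_mul, Nat.mul_div_cancel' (Nat.dvd_of_mem_divisors hk)]
  · exact (card_mem_divisors_and_parts_eq_replicate p (Finset.mem_filter.1 hp).2).1
  · simp [Multiset.toFinset_replicate, (Nat.pos_of_mem_divisors hk).ne']
  · exact Nat.Partition.ext
      (card_mem_divisors_and_parts_eq_replicate p (Finset.mem_filter.1 hp).2).2.symm

theorem sptbar2_eq_sum (n : ℕ) :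
    sptbar2 n = ∑ p : n.Partition,
      if HasEvenMin p.parts then numSmallest p.parts * 2 ^ (#p.parts.toFinset - 1) else 0 := by
  refine Finset.sum_congr rfl fun p _ => ?_
  by_cases h : HasEvenMin p.parts
  · rw [if_pos h]
    obtain ⟨m, hm, hmin, -⟩ := id h
    unfold HasEvenMin at h
    simp only [and_iff_left h]
    rw [← Finset.sum_filter, Finset.sum_const, smul_eq_mul,
      Multiset.card_filter_powerset_forall_exists_lt hm hmin, mul_comm]
  · rw [if_neg h]
    exact Finset.sum_eq_zero fun S _ => if_neg fun hS => h hS.2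

theorem Nat.Partition.natCast_summand_eq {n : ℕ} (p : n.Partition) :
    ((if HasEvenMin p.parts then numSmallest p.parts * 2 ^ (#p.parts.toFinset - 1) else 0 : ℕ)
        : ZMod 2)
      = if #p.parts.toFinset = 1 then
          (if Even (n / p.parts.card) then (p.parts.card : ZMod 2) else 0) else 0 := by
  by_cases hd : #p.parts.toFinset = 1
  · obtain ⟨hk, hp⟩ := p.card_mem_divisors_and_parts_eq_replicate hd
    generalize p.parts.card = k at hk hp ⊢
    have hk0 : k ≠ 0 := (Nat.pos_of_mem_divisors hk).ne'
    rw [if_pos hd, hd, hp, hasEvenMin_replicate hk0, numSmallest_replicate]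
    split_ifs <;> simp
  · rw [if_neg hd]
    split_ifs with h
    · have hpos : #p.parts.toFinset ≠ 0 := by
        obtain ⟨a, ha, -⟩ := h
        exact (Finset.card_pos.2 ⟨a, Multiset.mem_toFinset.2 ha⟩).ne'
      rw [Nat.cast_mul, Nat.cast_pow, Nat.cast_ofNat, show (2 : ZMod 2) = 0 from rfl,
        zero_pow (by omega), mul_zero]
    · rfl

theorem natCast_sptbar2_eq_card_filter_divisors (n : ℕ) :
    (sptbar2 n : ZMod 2) = #{k ∈ n.divisors | Even (n / k) ∧ Odd k} := by
  rw [sptbar2_eq_sum, Nat.cast_sum, Finset.sum_congr rfl fun p _ => p.natCast_summand_eq,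
    ← Finset.sum_filter,
    Nat.Partition.sum_filter_card_toFinset_eq_one n
      fun k => if Even (n / k) then (k : ZMod 2) else 0,
    Finset.natCast_card_filter]
  refine Finset.sum_congr rfl fun k _ => ?_
  rw [ite_and]
  congr 1
  rcases Nat.even_or_odd k with hk | hk
  · rw [if_neg (Nat.not_odd_iff_even.2 hk), ZMod.natCast_eq_zero_iff_even.2 hk]
  · rw [if_pos hk, ZMod.natCast_eq_one_iff_odd.2 hk]

theorem sptbar2_odd_iff (n : ℕ) (hn : 1 ≤ n) :
    Odd (sptbar2 n) ↔ (∃ k, Even n ∧ n = k ^ 2) ∨ (∃ k, n = 2 * k ^ 2) := by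
  have hn0 : n ≠ 0 := Nat.one_le_iff_ne_zero.1 hn
  rw [← ZMod.natCast_eq_one_iff_odd, natCast_sptbar2_eq_card_filter_divisors,
    ZMod.natCast_eq_one_iff_odd]
  rcases Nat.even_or_odd n with hev | hodd
  · rw [Nat.filter_divisors_eq_divisors_ordCompl_two hn0 hev,
      Nat.odd_card_divisors_iff_isSquare (Nat.ordCompl_pos 2 hn0).ne',
      Nat.isSquare_ordCompl_two_iff hn0]
    simp only [hev, true_and, IsSquare, sq]
  · have hnev : ¬Even n := Nat.not_even_iff_odd.2 hodd
    rw [Nat.filter_divisors_eq_empty_of_odd hodd, Finset.card_empty]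
    refine iff_of_false (by simp) ?_
    rintro (⟨k, he, -⟩ | ⟨k, rfl⟩)
    exacts [hnev he, hnev (even_two_mul _)]
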